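/- arXiv:1202.1033 — 3 statements merged into one kernel-verified Lean document; each statement's English description precedes it below -/
import Mathlib

section
/- Let N ≥ 2 and let a, b, c : Fin (N−1) → ℝ with a_j ≠ 0, b_j ≠ 0 and c_j ≠ 0 for every j. Let H_0 be the XYZ chain Hamiltonian of length N with couplings a, b, c (this includes the XXZ case a_j = b_j), and let H_1 = Z_1, H_2 = X_1 be two controls on the end spin. Then the dynamical Lie algebra generated by H_0, H_1, H_2 equals su(2^N), the set of all traceless skew-Hermitian 2^N × 2^N complex matrices; i.e., the system is fully controllable. -/
open Matrix Complex Finset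

attribute [local instance 100] LieRing.ofAssociativeRing

/-- The Pauli X matrix. -/
noncomputable def PauliX : Matrix (Fin 2) (Fin 2) ℂ := !![0, 1; 1, 0]
/-- The Pauli Y matrix. -/
noncomputable def PauliY : Matrix (Fin 2) (Fin 2) ℂ := !![0, -Complex.I; Complex.I, 0]
/-- The Pauli Z matrix. -/
noncomputable def PauliZ : Matrix (Fin 2) (Fin 2) ℂ := !![1, 0; 0, -1]

/-- Tensor product of `N` single-qubit matrices: the entry at `(x, y)` is `∏ j, (P j) (x j) (y j)`. -/
noncomputable def kronN {N : ℕ} (P : Fin N → Matrix (Fin 2) (Fin 2) ℂ) :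
    Matrix (Fin N → Fin 2) (Fin N → Fin 2) ℂ :=
  Matrix.of fun x y => ∏ j, P j (x j) (y j)

/-- The single-qubit operator `R` acting on site `k`, identity elsewhere. -/
noncomputable def localOp {N : ℕ} (k : Fin N) (R : Matrix (Fin 2) (Fin 2) ℂ) :
    Matrix (Fin N → Fin 2) (Fin N → Fin 2) ℂ :=
  kronN (fun m => if m = k then R else 1)

/-- The two-site operator with `R` at site `j`, `R'` at site `k`, identity elsewhere. -/
noncomputable def twoOp {N : ℕ} (j k : Fin N) (R R' : Matrix (Fin 2) (Fin 2) ℂ) :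
    Matrix (Fin N → Fin 2) (Fin N → Fin 2) ℂ :=
  kronN (fun m => if m = j then R else if m = k then R' else 1)

/-- Left site of the `j`-th bond of a chain of length `N`. -/
def siteL {N : ℕ} (j : Fin (N - 1)) : Fin N := ⟨j.val, by have := j.isLt; omega⟩
/-- Right site of the `j`-th bond of a chain of length `N`. -/
def siteR {N : ℕ} (j : Fin (N - 1)) : Fin N := ⟨j.val + 1, by have := j.isLt; omega⟩

/-- The XYZ chain Hamiltonian of length `N` with couplings `a b c : Fin (N-1) → ℝ`:
`H₀ = Σ_j (a_j X_j X_{j+1} + b_j Y_j Y_{j+1} + c_j Z_j Z_{j+1})`. -/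
noncomputable def xyzChain (N : ℕ) (a b c : Fin (N - 1) → ℝ) :
    Matrix (Fin N → Fin 2) (Fin N → Fin 2) ℂ :=
  ∑ j : Fin (N - 1),
    ((a j : ℂ) • twoOp (siteL j) (siteR j) PauliX PauliX +
     (b j : ℂ) • twoOp (siteL j) (siteR j) PauliY PauliY +
     (c j : ℂ) • twoOp (siteL j) (siteR j) PauliZ PauliZ)

/-- The XX chain Hamiltonian of length `N` with couplings `γ : Fin (N-1) → ℝ`:
`H₀ = Σ_j γ_j (X_j X_{j+1} + Y_j Y_{j+1})`. -/
noncomputable def xxChain (N : ℕ) (γ : Fin (N - 1) → ℝ) :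
    Matrix (Fin N → Fin 2) (Fin N → Fin 2) ℂ :=
  ∑ j : Fin (N - 1),
    (γ j : ℂ) • (twoOp (siteL j) (siteR j) PauliX PauliX +
                 twoOp (siteL j) (siteR j) PauliY PauliY)

/-!
In the basis of Pauli strings, `i σ_s` (`s ≠ 0`) span `su(2^N)` over `ℝ`, and
`⁅i σ_s, i σ_t⁆` is a nonzero real multiple of `i σ_{st}` when `σ_s, σ_t` anticommute and `0`
otherwise. So it suffices to show that the dynamical Lie algebra contains every `i σ_s`, which is
done by induction on the rightmost site `k` of the support of `s`. The controls give `X_1, Z_1`,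
hence `Y_1`. For the step, bracketing `σ_A` at site `k` (with any prefix) with `i H_0` leaves,
modulo strings already obtained, only the bond `(k, k+1)`; one more bracket with a single-site
`σ_B` at `k` isolates the bond term `σ_B σ_B`, whose coupling is nonzero, and yields
`σ_A σ_B` on `(k, k+1)` for all distinct nonidentity `A, B`. Products of these give every
remaining pair of letters on `(k, k+1)`.
-/

lemma mem_of_sum_mem {ι M S : Type*} [Fintype ι] [DecidableEq ι] [AddCommGroup M] [SetLike S M]
    [AddSubgroupClass S M] {H : S} {f : ι → M} (i : ι) (hsum : ∑ j, f j ∈ H)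
    (hf : ∀ j, j ≠ i → f j ∈ H) : f i ∈ H := by
  have h := sub_mem hsum (sum_mem (t := univ.erase i) fun j hj => hf j (ne_of_mem_erase hj))
  rwa [← add_sum_erase _ _ (mem_univ i), add_sub_cancel_right] at h

noncomputable def pauli : Fin 4 → Matrix (Fin 2) (Fin 2) ℂ := ![1, PauliX, PauliY, PauliZ]

def pauliPhase : Fin 4 → Fin 4 → ℕ :=
  ![![0, 0, 0, 0], ![0, 0, 1, 3], ![0, 3, 0, 1], ![0, 1, 3, 0]]

lemma pauli_mul (a b : Fin 4) : pauli a * pauli b = I ^ pauliPhase a b • pauli (a ^^^ b) := by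
  fin_cases a <;> fin_cases b <;> ext i j <;> fin_cases i <;> fin_cases j <;>
    simp [pauli, pauliPhase, PauliX, PauliY, PauliZ, Matrix.mul_apply, pow_succ]

lemma pauli_conjTranspose (a : Fin 4) : (pauli a)ᴴ = pauli a := by
  fin_cases a <;> ext i j <;> fin_cases i <;> fin_cases j <;> simp [pauli, PauliX, PauliY, PauliZ]

lemma trace_pauli {a : Fin 4} (ha : a ≠ 0) : (pauli a).trace = 0 := by
  fin_cases a <;> simp_all [pauli, PauliX, PauliY, PauliZ, Matrix.trace_fin_two]

lemma sum_pauli_apply_mul_pauli_apply (i j k l : Fin 2) :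
    ∑ a, pauli a i j * pauli a k l =
      2 * ((1 : Matrix (Fin 2) (Fin 2) ℂ) i l * (1 : Matrix (Fin 2) (Fin 2) ℂ) j k) := by
  fin_cases i <;> fin_cases j <;> fin_cases k <;> fin_cases l <;>
    simp [pauli, PauliX, PauliY, PauliZ, Fin.sum_univ_four] <;> norm_num

lemma I_pow_pauliPhase_swap (a b : Fin 4) :
    I ^ pauliPhase b a = (-1) ^ pauliPhase a b * I ^ pauliPhase a b := by
  fin_cases a <;> fin_cases b <;> simp [pauliPhase, pow_succ]

lemma pauliPhase_self (a : Fin 4) : pauliPhase a a = 0 := by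
  fin_cases a <;> rfl

lemma pauliPhase_zero_right (a : Fin 4) : pauliPhase a 0 = 0 := by
  fin_cases a <;> rfl

lemma pauliPhase_zero_left (a : Fin 4) : pauliPhase 0 a = 0 := by
  fin_cases a <;> rfl

lemma pauli_label_cases {a : Fin 4} (ha : a ≠ 0) : a = 1 ∨ a = 2 ∨ a = 3 := by
  revert ha; fin_cases a <;> decide

noncomputable def lieCoeff (n : ℕ) : ℝ := if Even n then 0 else 2 * (-1) ^ ((n + 1) / 2)

lemma lieCoeff_of_even {n : ℕ} (h : Even n) : lieCoeff n = 0 := if_pos h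

lemma lieCoeff_ne_zero {n : ℕ} (h : Odd n) : lieCoeff n ≠ 0 := by
  rw [lieCoeff, if_neg (Nat.not_even_iff_odd.mpr h)]
  positivity

lemma lieCoeff_mul_I (n : ℕ) : (lieCoeff n : ℂ) * I = I ^ n * ((-1) ^ n - 1) := by
  rcases Nat.even_or_odd n with ⟨m, rfl⟩ | ⟨m, rfl⟩
  · simp [lieCoeff, Even.neg_one_pow ⟨m, rfl⟩]
  · have hm : (2 * m + 1 + 1) / 2 = m + 1 := by omega
    simp only [lieCoeff, if_neg (Nat.not_even_iff_odd.mpr (odd_two_mul_add_one m)), hm,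
      pow_succ, pow_mul, I_sq]
    push_cast
    ring

section kronN

variable {N : ℕ}

lemma kronN_mul (P Q : Fin N → Matrix (Fin 2) (Fin 2) ℂ) :
    kronN P * kronN Q = kronN (fun j => P j * Q j) := by
  ext x y
  simp only [kronN, mul_apply, of_apply, Fintype.prod_sum, prod_mul_distrib]

lemma kronN_smul (c : Fin N → ℂ) (P : Fin N → Matrix (Fin 2) (Fin 2) ℂ) :
    kronN (fun j => c j • P j) = (∏ j, c j) • kronN P := by
  ext x y
  simp only [kronN, of_apply, Matrix.smul_apply, smul_eq_mul, prod_mul_distrib]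

lemma kronN_one : kronN (fun _ : Fin N => (1 : Matrix (Fin 2) (Fin 2) ℂ)) = 1 := by
  ext x y
  simp only [kronN, of_apply, one_apply, prod_ite_zero, prod_const_one, funext_iff, mem_univ,
    true_imp_iff]

lemma conjTranspose_kronN (P : Fin N → Matrix (Fin 2) (Fin 2) ℂ) :
    (kronN P)ᴴ = kronN (fun j => (P j)ᴴ) := by
  ext x y
  simp [kronN, star_prod]

lemma trace_kronN (P : Fin N → Matrix (Fin 2) (Fin 2) ℂ) :
    (kronN P).trace = ∏ j, (P j).trace := by
  simp only [trace, Matrix.diag, kronN, of_apply, Fintype.prod_sum]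

end kronN

section pauliString

variable {N : ℕ}

noncomputable def pauliString (s : Fin N → Fin 4) : Matrix (Fin N → Fin 2) (Fin N → Fin 2) ℂ :=
  kronN (fun j => pauli (s j))

def stringMul (s t : Fin N → Fin 4) : Fin N → Fin 4 := fun j => s j ^^^ t j

def stringPhase (s t : Fin N → Fin 4) : ℕ := ∑ j, pauliPhase (s j) (t j)

lemma pauliString_mul (s t : Fin N → Fin 4) :
    pauliString s * pauliString t = I ^ stringPhase s t • pauliString (stringMul s t) := by
  simp only [pauliString, kronN_mul, pauli_mul, kronN_smul, prod_pow_eq_pow_sum, stringPhase,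
    stringMul]

lemma stringMul_comm (s t : Fin N → Fin 4) : stringMul t s = stringMul s t :=
  funext fun _ => Fin.xor_comm _ _

lemma I_pow_stringPhase_swap (s t : Fin N → Fin 4) :
    I ^ stringPhase t s = (-1) ^ stringPhase s t * I ^ stringPhase s t := by
  simp only [stringPhase, ← prod_pow_eq_pow_sum, ← prod_mul_distrib]
  exact prod_congr rfl fun j _ => I_pow_pauliPhase_swap _ _

lemma pauliString_conjTranspose (s : Fin N → Fin 4) : (pauliString s)ᴴ = pauliString s := by
  simp only [pauliString, conjTranspose_kronN, pauli_conjTranspose]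

lemma pauliString_zero : pauliString (0 : Fin N → Fin 4) = 1 :=
  kronN_one

lemma trace_pauliString {s : Fin N → Fin 4} (hs : s ≠ 0) : (pauliString s).trace = 0 := by
  obtain ⟨j, hj⟩ := Function.ne_iff.mp hs
  rw [pauliString, trace_kronN]
  exact prod_eq_zero (mem_univ j) (trace_pauli hj)

lemma stringMul_ne_zero_of_odd {s t : Fin N → Fin 4} (h : Odd (stringPhase s t)) :
    stringMul s t ≠ 0 := by
  intro h0
  have hst : s = t := funext fun j =>
    (by decide : ∀ a b : Fin 4, a ^^^ b = 0 → a = b) _ _ (congrFun h0 j)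
  subst hst
  simp [stringPhase, pauliPhase_self] at h

lemma sum_pauliString_apply_mul (x y z w : Fin N → Fin 2) :
    ∑ s, pauliString s z w * pauliString s x y =
      2 ^ N * ((1 : Matrix (Fin N → Fin 2) (Fin N → Fin 2) ℂ) z y *
        (1 : Matrix (Fin N → Fin 2) (Fin N → Fin 2) ℂ) w x) := by
  have hone (u v : Fin N → Fin 2) :
      ∏ j, (1 : Matrix (Fin 2) (Fin 2) ℂ) (u j) (v j) = (1 : Matrix _ _ ℂ) u v := by
    rw [← kronN_one]; rfl
  simp only [pauliString, kronN, of_apply, ← prod_mul_distrib]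
  rw [← Fintype.prod_sum fun j (a : Fin 4) => pauli a (z j) (w j) * pauli a (x j) (y j)]
  simp only [sum_pauli_apply_mul_pauli_apply, prod_mul_distrib, prod_const, card_univ,
    Fintype.card_fin, hone]

lemma sum_trace_mul_smul_pauliString (M : Matrix (Fin N → Fin 2) (Fin N → Fin 2) ℂ) :
    ∑ s, (pauliString s * M).trace • pauliString s = (2 ^ N : ℂ) • M := by
  ext x y
  simp only [Matrix.sum_apply, Matrix.smul_apply, smul_eq_mul, trace, Matrix.diag, mul_apply,
    sum_mul]
  calc ∑ s, ∑ i, ∑ j, pauliString s i j * M j i * pauliString s x y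
      = ∑ i, ∑ j, M j i * ∑ s, pauliString s i j * pauliString s x y := by
        simp only [mul_sum]
        rw [sum_comm]
        refine sum_congr rfl fun i _ => ?_
        rw [sum_comm]
        exact sum_congr rfl fun j _ => sum_congr rfl fun s _ => by ring
    _ = 2 ^ N * M x y := by
        simp [sum_pauliString_apply_mul, one_apply, mul_comm]

lemma lie_pauliString (s t : Fin N → Fin 4) :
    ⁅I • pauliString s, I • pauliString t⁆ =
      lieCoeff (stringPhase s t) • (I • pauliString (stringMul s t)) := by
  rw [Ring.lie_def, smul_mul_smul_comm, smul_mul_smul_comm, pauliString_mul, pauliString_mul,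
    stringMul_comm s t, I_pow_stringPhase_swap s t, smul_smul, smul_smul, ← sub_smul,
    ← Complex.coe_smul, smul_smul, lieCoeff_mul_I]
  congr 1
  ring_nf
  simp [I_sq]

lemma lie_lie_pauliString (s t z : Fin N → Fin 4) :
    ⁅⁅I • pauliString s, I • pauliString t⁆, I • pauliString z⁆ =
      (lieCoeff (stringPhase s t) * lieCoeff (stringPhase (stringMul s t) z)) •
        (I • pauliString (stringMul (stringMul s t) z)) := by
  rw [lie_pauliString, smul_lie, lie_pauliString, smul_smul]

end pauliString

section LieSubalgebra

variable {N : ℕ} (g : LieSubalgebra ℝ (Matrix (Fin N → Fin 2) (Fin N → Fin 2) ℂ))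

lemma stringMul_mem_of_odd {s t : Fin N → Fin 4} (hs : I • pauliString s ∈ g)
    (ht : I • pauliString t ∈ g) (h : Odd (stringPhase s t)) :
    I • pauliString (stringMul s t) ∈ g := by
  have hst := g.lie_mem hs ht
  rw [lie_pauliString] at hst
  exact (Submodule.smul_mem_iff g.toSubmodule (lieCoeff_ne_zero h)).mp hst

lemma lie_mem_of_odd_imp {s t : Fin N → Fin 4}
    (h : Odd (stringPhase s t) → I • pauliString (stringMul s t) ∈ g) :
    ⁅I • pauliString s, I • pauliString t⁆ ∈ g := by
  rw [lie_pauliString]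
  rcases Nat.even_or_odd (stringPhase s t) with he | ho
  · rw [lieCoeff_of_even he, zero_smul]
    exact g.zero_mem
  · exact g.smul_mem _ (h ho)

end LieSubalgebra

section su

variable {N : ℕ}

noncomputable def su (N : ℕ) : LieSubalgebra ℝ (Matrix (Fin N → Fin 2) (Fin N → Fin 2) ℂ) where
  carrier := {M | Mᴴ = -M ∧ M.trace = 0}
  add_mem' hx hy := ⟨by rw [conjTranspose_add, hx.1, hy.1, neg_add],
    by rw [trace_add, hx.2, hy.2, add_zero]⟩
  zero_mem' := ⟨by simp, by simp⟩
  smul_mem' r x hx := ⟨by rw [conjTranspose_smul, hx.1, star_trivial, smul_neg],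
    by rw [trace_smul, hx.2, smul_zero]⟩
  lie_mem' {x y} hx hy := by
    refine ⟨?_, by rw [Ring.lie_def, trace_sub, trace_mul_comm, sub_self]⟩
    rw [Ring.lie_def, conjTranspose_sub, conjTranspose_mul, conjTranspose_mul, hx.1, hy.1]
    simp only [Matrix.neg_mul, Matrix.mul_neg, neg_neg, neg_sub]

lemma I_smul_pauliString_mem_su {s : Fin N → Fin 4} (hs : s ≠ 0) : I • pauliString s ∈ su N :=
  ⟨by rw [conjTranspose_smul, star_def, conj_I, pauliString_conjTranspose, neg_smul],
    by rw [trace_smul, trace_pauliString hs, smul_zero]⟩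

lemma re_trace_pauliString_mul_eq_zero {M : Matrix (Fin N → Fin 2) (Fin N → Fin 2) ℂ}
    (hM : Mᴴ = -M) (s : Fin N → Fin 4) : (pauliString s * M).trace.re = 0 := by
  have hstar : star (pauliString s * M).trace = -(pauliString s * M).trace := by
    rw [← trace_conjTranspose, conjTranspose_mul, pauliString_conjTranspose, hM, Matrix.neg_mul,
      trace_neg, trace_mul_comm]
  have := congrArg re hstar
  rw [star_def, conj_re, neg_re] at this
  linarith

lemma su_le_of_forall_mem (g : LieSubalgebra ℝ (Matrix (Fin N → Fin 2) (Fin N → Fin 2) ℂ))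
    (h : ∀ s, s ≠ 0 → I • pauliString s ∈ g) : su N ≤ g := by
  rintro M ⟨hM, htr⟩
  have hcoeff (s : Fin N → Fin 4) : (pauliString s * M).trace • pauliString s =
      (pauliString s * M).trace.im • (I • pauliString s) := by
    conv_lhs => rw [← re_add_im (pauliString s * M).trace, re_trace_pauliString_mul_eq_zero hM]
    rw [← Complex.coe_smul, smul_smul]
    simp
  have hexpand : M = ((2 : ℝ) ^ N)⁻¹ •
      ∑ s, (pauliString s * M).trace.im • (I • pauliString s) := by
    rw [← sum_congr rfl fun s _ => hcoeff s, sum_trace_mul_smul_pauliString, ← Complex.coe_smul,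
      smul_smul]
    norm_num
  rw [hexpand]
  refine g.smul_mem _ (sum_mem fun s _ => ?_)
  by_cases hs : s = 0
  · simp [hs, pauliString_zero, htr]
  · exact g.smul_mem _ (h s hs)

end su

section twoSite

variable {N : ℕ} {κ₁ κ₂ : Fin N}

def twoSite (κ₁ κ₂ : Fin N) (A B : Fin 4) (Q : Fin N → Fin 4) : Fin N → Fin 4 :=
  Function.update (Function.update Q κ₁ A) κ₂ B

lemma twoSite_apply_left (hne : κ₁ ≠ κ₂) (A B : Fin 4) (Q : Fin N → Fin 4) :
    twoSite κ₁ κ₂ A B Q κ₁ = A := by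
  simp [twoSite, hne]

lemma twoSite_apply_right (A B : Fin 4) (Q : Fin N → Fin 4) : twoSite κ₁ κ₂ A B Q κ₂ = B := by
  simp [twoSite]

lemma twoSite_apply_of_ne {m : Fin N} (h₁ : m ≠ κ₁) (h₂ : m ≠ κ₂) (A B : Fin 4)
    (Q : Fin N → Fin 4) : twoSite κ₁ κ₂ A B Q m = Q m := by
  simp [twoSite, h₁, h₂]

lemma twoSite_self (s : Fin N → Fin 4) : twoSite κ₁ κ₂ (s κ₁) (s κ₂) s = s := by
  simp [twoSite]

lemma twoSite_ne_zero_left (hne : κ₁ ≠ κ₂) {A : Fin 4} (hA : A ≠ 0) (B : Fin 4)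
    (Q : Fin N → Fin 4) : twoSite κ₁ κ₂ A B Q ≠ 0 := fun h =>
  hA (by rw [← twoSite_apply_left hne A B Q, h, Pi.zero_apply])

lemma twoSite_ne_zero_right {B : Fin 4} (hB : B ≠ 0) (A : Fin 4) (Q : Fin N → Fin 4) :
    twoSite κ₁ κ₂ A B Q ≠ 0 := fun h =>
  hB (by rw [← twoSite_apply_right A B Q, h, Pi.zero_apply])

lemma stringMul_twoSite_zero (hne : κ₁ ≠ κ₂) (A B A' B' : Fin 4) (Q : Fin N → Fin 4) :
    stringMul (twoSite κ₁ κ₂ A B Q) (twoSite κ₁ κ₂ A' B' 0) =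
      twoSite κ₁ κ₂ (A ^^^ A') (B ^^^ B') Q := by
  funext m
  by_cases h₁ : m = κ₁
  · subst h₁; simp [stringMul, twoSite_apply_left hne]
  by_cases h₂ : m = κ₂
  · subst h₂; simp [stringMul, twoSite_apply_right]
  simp [stringMul, twoSite_apply_of_ne h₁ h₂]

lemma stringPhase_twoSite_zero (hne : κ₁ ≠ κ₂) (A B A' B' : Fin 4) (Q : Fin N → Fin 4) :
    stringPhase (twoSite κ₁ κ₂ A B Q) (twoSite κ₁ κ₂ A' B' 0) =
      pauliPhase A A' + pauliPhase B B' := by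
  rw [stringPhase, Fintype.sum_eq_add κ₁ κ₂ hne fun m hm => ?_, twoSite_apply_left hne,
    twoSite_apply_left hne, twoSite_apply_right, twoSite_apply_right]
  rw [twoSite_apply_of_ne hm.1 hm.2 A' B', Pi.zero_apply, pauliPhase_zero_right]

lemma twoOp_pauli (hne : κ₁ ≠ κ₂) (A B : Fin 4) :
    twoOp κ₁ κ₂ (pauli A) (pauli B) = pauliString (twoSite κ₁ κ₂ A B 0) := by
  rw [twoOp, pauliString]
  congr 1
  funext m
  by_cases h₁ : m = κ₁
  · subst h₁; simp [twoSite_apply_left hne]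
  by_cases h₂ : m = κ₂
  · subst h₂; simp [twoSite_apply_right, Ne.symm hne]
  simp [twoSite_apply_of_ne h₁ h₂, h₁, h₂, pauli]

lemma localOp_pauli (hne : κ₁ ≠ κ₂) (A : Fin 4) :
    localOp κ₁ (pauli A) = pauliString (twoSite κ₁ κ₂ A 0 0) := by
  rw [← twoOp_pauli hne, localOp, twoOp]
  simp [pauli]

noncomputable def skewBond (κ₁ κ₂ : Fin N) (w : Fin 4 → ℝ) :
    Matrix (Fin N → Fin 2) (Fin N → Fin 2) ℂ :=
  ∑ t, w t • (I • pauliString (twoSite κ₁ κ₂ t t 0))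

variable (g : LieSubalgebra ℝ (Matrix (Fin N → Fin 2) (Fin N → Fin 2) ℂ))

lemma twoSite_xor_mem (hne : κ₁ ≠ κ₂) {A B A' B' C D : Fin 4} {Q : Fin N → Fin 4}
    (h : I • pauliString (twoSite κ₁ κ₂ A B Q) ∈ g)
    (h' : I • pauliString (twoSite κ₁ κ₂ A' B' 0) ∈ g)
    (hodd : Odd (pauliPhase A A' + pauliPhase B B') := by decide)
    (hC : A ^^^ A' = C := by decide) (hD : B ^^^ B' = D := by decide) :
    I • pauliString (twoSite κ₁ κ₂ C D Q) ∈ g := by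
  rw [← hC, ← hD, ← stringMul_twoSite_zero hne]
  exact stringMul_mem_of_odd g h h' (by rwa [stringPhase_twoSite_zero hne])

lemma twoSite_mem_of_lie_skewBond_mem (hne : κ₁ ≠ κ₂) {w : Fin 4 → ℝ} {Q : Fin N → Fin 4}
    {A B : Fin 4} (hA : A ≠ 0) (hB : B ≠ 0) (hAB : A ≠ B) (hw : w B ≠ 0)
    (hsingle : I • pauliString (twoSite κ₁ κ₂ B 0 0) ∈ g)
    (hbond : ⁅I • pauliString (twoSite κ₁ κ₂ A 0 Q), skewBond κ₁ κ₂ w⁆ ∈ g) :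
    I • pauliString (twoSite κ₁ κ₂ A B Q) ∈ g := by
  -- Of the bond terms `σ_t σ_t`, only `t = B` survives both brackets.
  have hparity : ∀ A B t : Fin 4, A ≠ 0 → B ≠ 0 → A ≠ B →
      (Odd (pauliPhase A t + pauliPhase 0 t) ∧
        Odd (pauliPhase (A ^^^ t) B + pauliPhase (0 ^^^ t) 0) ↔ t = B) := by
    decide
  have hterm (t : Fin 4) :
      ⁅⁅I • pauliString (twoSite κ₁ κ₂ A 0 Q), w t • (I • pauliString (twoSite κ₁ κ₂ t t 0))⁆,
        I • pauliString (twoSite κ₁ κ₂ B 0 0)⁆ =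
      (w t * (lieCoeff (pauliPhase A t + pauliPhase 0 t) *
        lieCoeff (pauliPhase (A ^^^ t) B + pauliPhase (0 ^^^ t) 0))) •
        (I • pauliString (twoSite κ₁ κ₂ (A ^^^ t ^^^ B) (0 ^^^ t ^^^ 0) Q)) := by
    rw [lie_smul (w t), smul_lie (w t), lie_lie_pauliString, stringMul_twoSite_zero hne,
      stringMul_twoSite_zero hne, stringPhase_twoSite_zero hne, stringPhase_twoSite_zero hne,
      smul_smul]
  have h := g.lie_mem hbond hsingle
  rw [skewBond, lie_sum, sum_lie, Fintype.sum_eq_single B fun t ht => ?_, hterm] at h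
  · obtain ⟨h₁, h₂⟩ := (hparity A B B hA hB hAB).mpr rfl
    have hcoeff := mul_ne_zero hw (mul_ne_zero (lieCoeff_ne_zero h₁) (lieCoeff_ne_zero h₂))
    have hB' : 0 ^^^ B ^^^ 0 = B := by rw [Fin.xor_zero, Fin.xor_comm, Fin.xor_zero]
    have h' := (Submodule.smul_mem_iff g.toSubmodule hcoeff).mp h
    rwa [Fin.xor_assoc (n := 2) rfl, Fin.xor_self, Fin.xor_zero, hB'] at h'
  · rw [hterm]
    rcases not_and_or.mp ((hparity A B t hA hB hAB).not.mpr ht) with h' | h'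
    · rw [lieCoeff_of_even (Nat.not_odd_iff_even.mp h'), zero_mul, mul_zero, zero_smul]
    · rw [lieCoeff_of_even (Nat.not_odd_iff_even.mp h'), mul_zero, mul_zero, zero_smul]

lemma twoSite_mem_of_forall_lie_skewBond_mem (hne : κ₁ ≠ κ₂) {w : Fin 4 → ℝ}
    (hw : ∀ t, t ≠ 0 → w t ≠ 0) {Q : Fin N → Fin 4}
    (hsingle : ∀ A, A ≠ 0 → I • pauliString (twoSite κ₁ κ₂ A 0 0) ∈ g)
    (hbond₀ : ∀ A, A ≠ 0 → ⁅I • pauliString (twoSite κ₁ κ₂ A 0 0), skewBond κ₁ κ₂ w⁆ ∈ g)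
    (hbond : ∀ A, A ≠ 0 → ⁅I • pauliString (twoSite κ₁ κ₂ A 0 Q), skewBond κ₁ κ₂ w⁆ ∈ g)
    (A : Fin 4) {B : Fin 4} (hB : B ≠ 0) : I • pauliString (twoSite κ₁ κ₂ A B Q) ∈ g := by
  have seed {Q' : Fin N → Fin 4}
      (hQ' : ∀ A, A ≠ 0 → ⁅I • pauliString (twoSite κ₁ κ₂ A 0 Q'), skewBond κ₁ κ₂ w⁆ ∈ g)
      (A B : Fin 4) (hA : A ≠ 0 := by decide) (hB : B ≠ 0 := by decide)
      (hAB : A ≠ B := by decide) :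
      I • pauliString (twoSite κ₁ κ₂ A B Q') ∈ g :=
    twoSite_mem_of_lie_skewBond_mem g hne hA hB hAB (hw B hB) (hsingle B hB) (hQ' A hA)
  by_cases hA : A = 0
  · subst hA
    rcases pauli_label_cases hB with rfl | rfl | rfl
    · exact twoSite_xor_mem g hne (seed hbond 1 2) (seed hbond₀ 1 3)
    · exact twoSite_xor_mem g hne (seed hbond 2 1) (seed hbond₀ 2 3)
    · exact twoSite_xor_mem g hne (seed hbond 3 1) (seed hbond₀ 3 2)
  by_cases hAB : A = B
  · subst hAB
    rcases pauli_label_cases hA with rfl | rfl | rfl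
    · exact twoSite_xor_mem g hne (seed hbond 2 1) (hsingle 3 (by decide))
    · exact twoSite_xor_mem g hne (seed hbond 3 2) (hsingle 1 (by decide))
    · exact twoSite_xor_mem g hne (seed hbond 1 3) (hsingle 2 (by decide))
  exact seed hbond A B hA hB hAB

end twoSite

section chain

variable {N : ℕ}

lemma siteL_ne_siteR (j : Fin (N - 1)) : siteL j ≠ siteR (N := N) j := by
  simp [siteL, siteR, Fin.ext_iff]

lemma I_smul_xyzChain (a b c : Fin (N - 1) → ℝ) :
    I • xyzChain N a b c = ∑ j, skewBond (siteL j) (siteR j) ![0, a j, b j, c j] := by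
  rw [xyzChain, smul_sum]
  refine sum_congr rfl fun j _ => ?_
  rw [show PauliX = pauli 1 from rfl, show PauliY = pauli 2 from rfl,
    show PauliZ = pauli 3 from rfl]
  simp only [twoOp_pauli (siteL_ne_siteR j), skewBond, Fin.sum_univ_four, smul_add,
    smul_comm I, ← Complex.coe_smul]
  simp

lemma I_smul_xyzChain_mem_su (a b c : Fin (N - 1) → ℝ) : I • xyzChain N a b c ∈ su N := by
  rw [I_smul_xyzChain]
  refine sum_mem fun j _ => sum_mem fun t _ => ?_
  by_cases ht : t = 0
  · simp [ht]
  · exact (su N).smul_mem _ (I_smul_pauliString_mem_su (twoSite_ne_zero_right ht _ _))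

variable {g : LieSubalgebra ℝ (Matrix (Fin N → Fin 2) (Fin N → Fin 2) ℂ)}
  {a b c : Fin (N - 1) → ℝ}

lemma lie_skewBond_mem {k : ℕ} (hk : k < N - 1)
    (IH : ∀ s, s ≠ 0 → (∀ m : Fin N, k < m.val → s m = 0) → I • pauliString s ∈ g)
    (hH : I • xyzChain N a b c ∈ g) {s : Fin N → Fin 4} (hs : s ≠ 0)
    (hsupp : ∀ m : Fin N, k < m.val → s m = 0) :
    ⁅I • pauliString s, skewBond (siteL ⟨k, hk⟩) (siteR ⟨k, hk⟩)
      ![0, a ⟨k, hk⟩, b ⟨k, hk⟩, c ⟨k, hk⟩]⁆ ∈ g := by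
  have h := g.lie_mem (IH s hs hsupp) hH
  rw [I_smul_xyzChain, lie_sum] at h
  refine mem_of_sum_mem (⟨k, hk⟩ : Fin (N - 1)) h fun j hj => ?_
  rw [skewBond, lie_sum]
  refine sum_mem fun t _ => ?_
  rw [lie_smul]
  refine g.smul_mem _ (lie_mem_of_odd_imp g fun hodd => ?_)
  have hbond (m : Fin N) (h₁ : m.val ≠ j.val) (h₂ : m.val ≠ j.val + 1) :
      twoSite (siteL j) (siteR j) t t 0 m = 0 :=
    twoSite_apply_of_ne (fun h => h₁ (by simp [h, siteL]))
      (fun h => h₂ (by simp [h, siteR])) t t 0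
  -- Bonds left of `k` give strings supported up to `k`; bonds right of `k` commute with `s`.
  have hjk : j.val ≠ k := fun h => hj (Fin.ext h)
  rcases Nat.lt_or_gt_of_ne hjk with hlt | hgt
  · refine IH _ (stringMul_ne_zero_of_odd hodd) fun m hm => ?_
    simp [stringMul, hsupp m hm, hbond m (by omega) (by omega)]
  · refine absurd hodd (Nat.not_odd_iff_even.mpr ?_)
    refine ⟨0, sum_eq_zero fun m _ => ?_⟩
    by_cases hm : k < m.val
    · rw [hsupp m hm, pauliPhase_zero_left]
    · rw [hbond m (by omega) (by omega), pauliPhase_zero_right]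

lemma mem_of_support_le_succ (ha : ∀ j, a j ≠ 0) (hb : ∀ j, b j ≠ 0) (hc : ∀ j, c j ≠ 0)
    (hH : I • xyzChain N a b c ∈ g) {k : ℕ} (hk : k + 1 < N)
    (IH : ∀ s, s ≠ 0 → (∀ m : Fin N, k < m.val → s m = 0) → I • pauliString s ∈ g) :
    ∀ s, s ≠ 0 → (∀ m : Fin N, k + 1 < m.val → s m = 0) → I • pauliString s ∈ g := by
  have hk' : k < N - 1 := by omega
  set j : Fin (N - 1) := ⟨k, hk'⟩
  have hne := siteL_ne_siteR (N := N) j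
  have hw (t : Fin 4) (ht : t ≠ 0) : ![0, a j, b j, c j] t ≠ 0 := by
    fin_cases t <;> simp_all
  have hsupp (Q : Fin N → Fin 4) (hQ : ∀ m : Fin N, k + 1 < m.val → Q m = 0) (A : Fin 4)
      (m : Fin N) (hm : k < m.val) : twoSite (siteL j) (siteR j) A 0 Q m = 0 := by
    by_cases hR : m = siteR j
    · rw [hR, twoSite_apply_right]
    · rw [twoSite_apply_of_ne (fun h => by simp [h, siteL, j] at hm) hR]
      exact hQ m (lt_of_le_of_ne hm fun h => hR (Fin.ext (by simp [siteR, j, ← h])))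
  have hbond (Q : Fin N → Fin 4) (hQ : ∀ m : Fin N, k + 1 < m.val → Q m = 0) (A : Fin 4)
      (hA : A ≠ 0) :
      ⁅I • pauliString (twoSite (siteL j) (siteR j) A 0 Q),
        skewBond (siteL j) (siteR j) ![0, a j, b j, c j]⁆ ∈ g :=
    lie_skewBond_mem hk' IH hH (twoSite_ne_zero_left hne hA 0 Q) (hsupp Q hQ A)
  intro s hs hs_supp
  by_cases hR : s (siteR j) = 0
  · refine IH s hs fun m hm => ?_
    by_cases hm' : m = siteR j
    · rwa [hm']
    · exact hs_supp m (lt_of_le_of_ne hm fun h => hm' (Fin.ext (by simp [siteR, j, ← h])))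
  · rw [← twoSite_self (κ₁ := siteL j) (κ₂ := siteR j) s]
    exact twoSite_mem_of_forall_lie_skewBond_mem g hne hw
      (fun A hA => IH _ (twoSite_ne_zero_left hne hA 0 0) (hsupp 0 (fun _ _ => rfl) A))
      (hbond 0 fun _ _ => rfl) (hbond s hs_supp) _ hR

end chain

section generation

variable {N : ℕ} {g : LieSubalgebra ℝ (Matrix (Fin N → Fin 2) (Fin N → Fin 2) ℂ)}

lemma mem_of_support_le_zero (hN : 2 ≤ N)
    (hZ : I • localOp (⟨0, Nat.zero_lt_of_lt hN⟩ : Fin N) PauliZ ∈ g)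
    (hX : I • localOp (⟨0, Nat.zero_lt_of_lt hN⟩ : Fin N) PauliX ∈ g) :
    ∀ s, s ≠ 0 → (∀ m : Fin N, 0 < m.val → s m = 0) → I • pauliString s ∈ g := by
  set κ₀ : Fin N := ⟨0, Nat.zero_lt_of_lt hN⟩
  set κ₁ : Fin N := ⟨1, by omega⟩
  have hne : κ₀ ≠ κ₁ := by simp [κ₀, κ₁, Fin.ext_iff]
  rw [show PauliZ = pauli 3 from rfl, localOp_pauli hne] at hZ
  rw [show PauliX = pauli 1 from rfl, localOp_pauli hne] at hX
  have hY : I • pauliString (twoSite κ₀ κ₁ 2 0 0) ∈ g :=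
    twoSite_xor_mem g hne hZ hX
  intro s hs hsupp
  have hs_eq : s = twoSite κ₀ κ₁ (s κ₀) 0 0 := by
    funext m
    by_cases h₀ : m = κ₀
    · rw [h₀, twoSite_apply_left hne]
    have hm : 0 < m.val := Nat.pos_of_ne_zero fun h => h₀ (Fin.ext h)
    by_cases h₁ : m = κ₁
    · rw [h₁, twoSite_apply_right, ← h₁, hsupp m hm]
    · rw [twoSite_apply_of_ne h₀ h₁, hsupp m hm, Pi.zero_apply]
  have hs₀ : s κ₀ ≠ 0 := fun h => hs (by rw [hs_eq, h]; simp [twoSite])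
  rw [hs_eq]
  rcases pauli_label_cases hs₀ with h | h | h <;> rw [h]
  exacts [hX, hY, hZ]

theorem I_smul_pauliString_mem (hN : 2 ≤ N) {a b c : Fin (N - 1) → ℝ}
    (ha : ∀ j, a j ≠ 0) (hb : ∀ j, b j ≠ 0) (hc : ∀ j, c j ≠ 0)
    (hH : I • xyzChain N a b c ∈ g)
    (hZ : I • localOp (⟨0, Nat.zero_lt_of_lt hN⟩ : Fin N) PauliZ ∈ g)
    (hX : I • localOp (⟨0, Nat.zero_lt_of_lt hN⟩ : Fin N) PauliX ∈ g)
    {s : Fin N → Fin 4} (hs : s ≠ 0) : I • pauliString s ∈ g := by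
  have hsupp (k : ℕ) :
      ∀ s, s ≠ 0 → (∀ m : Fin N, k < m.val → s m = 0) → I • pauliString s ∈ g := by
    induction k with
    | zero => exact mem_of_support_le_zero hN hZ hX
    | succ k IH =>
      by_cases hk : k + 1 < N
      · exact mem_of_support_le_succ ha hb hc hH hk IH
      · exact fun s hs _ => IH s hs fun m hm => absurd m.isLt (by omega)
  exact hsupp (N - 1) s hs fun m hm => absurd m.isLt (by omega)

end generation

/-- An XYZ chain (including the XXZ case) with two end-spin controls `Z_1` and `X_1` is fully
controllable: the dynamical Lie algebra is `su(2^N)`, the traceless skew-Hermitian matrices. -/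
theorem xyz_two_end_controls_full (N : ℕ) (hN : 2 ≤ N) (a b c : Fin (N - 1) → ℝ)
    (ha : ∀ j, a j ≠ 0) (hb : ∀ j, b j ≠ 0) (hc : ∀ j, c j ≠ 0) :
    let H₀ := xyzChain N a b c
    let H₁ : Matrix (Fin N → Fin 2) (Fin N → Fin 2) ℂ := localOp ⟨0, by omega⟩ PauliZ
    let H₂ : Matrix (Fin N → Fin 2) (Fin N → Fin 2) ℂ := localOp ⟨0, by omega⟩ PauliX
    ((LieSubalgebra.lieSpan ℝ (Matrix (Fin N → Fin 2) (Fin N → Fin 2) ℂ)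
        {Complex.I • H₀, Complex.I • H₁, Complex.I • H₂}) :
      Set (Matrix (Fin N → Fin 2) (Fin N → Fin 2) ℂ)) =
      {M | Mᴴ = -M ∧ M.trace = 0} := by
  intro H₀ H₁ H₂
  have hne : (⟨0, Nat.zero_lt_of_lt hN⟩ : Fin N) ≠ ⟨1, by omega⟩ := by simp
  have hlocal (A : Fin 4) (hA : A ≠ 0) :
      I • localOp (⟨0, Nat.zero_lt_of_lt hN⟩ : Fin N) (pauli A) ∈ su N := by
    rw [localOp_pauli hne]
    exact I_smul_pauliString_mem_su (twoSite_ne_zero_left hne hA 0 0)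
  suffices LieSubalgebra.lieSpan ℝ _ {I • H₀, I • H₁, I • H₂} = su N by
    rw [this]; rfl
  refine le_antisymm (LieSubalgebra.lieSpan_le.mpr ?_) (su_le_of_forall_mem _ fun s hs => ?_)
  · rintro x (rfl | rfl | rfl)
    exacts [I_smul_xyzChain_mem_su a b c, hlocal 3 (by decide), hlocal 1 (by decide)]
  · exact I_smul_pauliString_mem hN ha hb hc (LieSubalgebra.subset_lieSpan (by simp [H₀]))
      (LieSubalgebra.subset_lieSpan (by simp [H₁])) (LieSubalgebra.subset_lieSpan (by simp [H₂])) hs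
end

section
/- Let N and p be positive integers with 2p ≤ N. In the polynomial ring over ℝ in 2N variables x_1, …, x_N, y_1, …, y_N (MvPolynomial (Fin N ⊕ Fin N) ℝ), for indices j ≠ k define q(j,k,true) = x_j x_k + y_j y_k and q(j,k,false) = x_j y_k − y_j x_k. Let E be the set of all products ∏_{i=1}^{p} q(m(2i−1), m(2i), ε(i)) over all injective functions m : Fin (2p) → Fin N and all sign choices ε : Fin p → Bool. Then the real dimension of the linear span of E equals (N choose p) · ((N − p) choose p). -/
open MvPolynomial

/-- The variable `x_j` in the polynomial ring in `2N` variables. -/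
noncomputable def xVar {N : ℕ} (j : Fin N) : MvPolynomial (Fin N ⊕ Fin N) ℝ :=
  MvPolynomial.X (Sum.inl j)

/-- The variable `y_j` in the polynomial ring in `2N` variables. -/
noncomputable def yVar {N : ℕ} (j : Fin N) : MvPolynomial (Fin N ⊕ Fin N) ℝ :=
  MvPolynomial.X (Sum.inr j)

/-- The quadratic factor `q(j,k,ε)`: `x_j x_k + y_j y_k` if `ε = true`,
and `x_j y_k − y_j x_k` if `ε = false`. -/
noncomputable def qFactor {N : ℕ} (j k : Fin N) (ε : Bool) : MvPolynomial (Fin N ⊕ Fin N) ℝ :=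
  if ε then xVar j * xVar k + yVar j * yVar k else xVar j * yVar k - yVar j * xVar k

/-!
Over `ℂ`, put `z_j = x_j + i y_j` and `w_j = x_j − i y_j`. Then `z_j w_k` and `z_k w_j` span the
same plane as `q(j,k,true)` and `q(j,k,false)`, so after complexification the span of `E` is
spanned by the monomials `∏_{a ∈ A} z_a ∏_{b ∈ B} w_b` over pairs of disjoint `p`-subsets
`A, B ⊆ {1, …, N}`. Since `(x, y) ↦ (z, w)` is an invertible linear change of variables, these
monomials are linearly independent, and there are `(N choose p) · ((N − p) choose p)` such pairs.
Complexification does not change dimensions because `ℂ` is flat over `ℝ`.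
-/

open Module Submodule
open scoped Pointwise Finset

section BaseChange

variable {K L : Type*} [Field K] [Field L] [Algebra K L]

theorem Submodule.finrank_span_image_one_tmul {V : Type*} [AddCommGroup V] [Module K V]
    (s : Set V) :
    finrank L (span L (TensorProduct.mk K L V 1 '' s)) = finrank K (span K s) := by
  rw [← baseChange_span, ← (toBaseChange.toLinearEquiv L (span K s)).finrank_eq,
    finrank_baseChange]

theorem MvPolynomial.finrank_span_image_map_algebraMap {σ : Type*}
    (s : Set (MvPolynomial σ K)) :
    finrank L (span L (map (algebraMap K L) '' s)) = finrank K (span K s) := by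
  let e := (algebraTensorAlgEquiv K L (σ := σ)).toLinearEquiv
  have : map (algebraMap K L) '' s = e '' (TensorProduct.mk K L _ 1 '' s) := by
    rw [Set.image_image]
    exact Set.image_congr fun P _ => by simp [e]
  rw [this, ← finrank_span_image_one_tmul (L := L) s, ← e.finrank_map_eq, map_span]
  rfl

end BaseChange

theorem Submodule.prod_mem_span_prod {R A ι : Type*} [CommSemiring R] [CommSemiring A]
    [Algebra R A] (s : Finset ι) {S : ι → Set A} {x : ι → A}
    (hx : ∀ i ∈ s, x i ∈ span R (S i)) : ∏ i ∈ s, x i ∈ span R (∏ i ∈ s, S i) := by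
  classical
  induction s using Finset.induction_on with
  | empty => exact subset_span (by simp)
  | insert a s ha ih =>
    rw [Finset.prod_insert ha, Finset.prod_insert ha, ← span_mul_span]
    exact mul_mem_mul (hx a (by simp)) (ih fun i hi => hx i (by simp [hi]))

theorem Finset.sum_single_one_injective {σ : Type*} :
    Function.Injective fun s : Finset σ => ∑ v ∈ s, Finsupp.single v 1 := by
  classical
  intro s t h
  ext u
  have := DFunLike.congr_fun h u
  simp only [Finsupp.finsetSum_apply, Finsupp.single_apply, Finset.sum_ite_eq'] at this
  by_cases hs : u ∈ s <;> by_cases ht : u ∈ t <;> simp_all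

theorem MvPolynomial.linearIndependent_prod_X {R σ : Type*} [CommSemiring R] :
    LinearIndependent R fun s : Finset σ => ∏ v ∈ s, (X v : MvPolynomial σ R) := by
  convert (basisMonomials σ R).linearIndependent.comp _ Finset.sum_single_one_injective with s
  simp [X, monomial_sum_one]

theorem Finset.card_filter_disjoint_pairs {ι : Type*} [Fintype ι] [DecidableEq ι] (p : ℕ) :
    #{t : Finset ι × Finset ι | #t.1 = p ∧ #t.2 = p ∧ Disjoint t.1 t.2} =
      (Fintype.card ι).choose p * (Fintype.card ι - p).choose p := by
  calc _ = #((univ.powersetCard p).sigma fun A : Finset ι => Aᶜ.powersetCard p) :=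
        card_nbij' (fun t => ⟨t.1, t.2⟩) (fun x => (x.1, x.2))
          (fun _ h => by simp_all [subset_compl_iff_disjoint_left])
          (fun _ h => by simp_all [subset_compl_iff_disjoint_left])
          (fun _ _ => rfl) (fun _ _ => rfl)
    _ = _ := by
      rw [card_sigma, sum_const_nat fun A hA => by
        rw [card_powersetCard, card_compl, (mem_powersetCard.mp hA).2], card_powersetCard,
        card_univ]

section ComplexCoordinates

variable {ι : Type*}

noncomputable def zVar (j : ι) : MvPolynomial (ι ⊕ ι) ℂ :=
  X (.inl j) + C Complex.I * X (.inr j)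

noncomputable def wVar (j : ι) : MvPolynomial (ι ⊕ ι) ℂ :=
  X (.inl j) - C Complex.I * X (.inr j)

noncomputable def toZW : MvPolynomial (ι ⊕ ι) ℂ →ₐ[ℂ] MvPolynomial (ι ⊕ ι) ℂ :=
  aeval (Sum.elim zVar wVar)

noncomputable def ofZW : MvPolynomial (ι ⊕ ι) ℂ →ₐ[ℂ] MvPolynomial (ι ⊕ ι) ℂ :=
  aeval (Sum.elim (fun j => C (1 / 2) * (X (.inl j) + X (.inr j)))
    (fun j => C (-Complex.I / 2) * (X (.inl j) - X (.inr j))))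

theorem ofZW_comp_toZW : (ofZW (ι := ι)).comp toZW = AlgHom.id ℂ _ := by
  have hI : (C (-Complex.I / 2) * C Complex.I : MvPolynomial (ι ⊕ ι) ℂ) = C (1 / 2) := by
    rw [← C_mul]
    congr 1
    linear_combination (-1 / 2 : ℂ) * Complex.I_mul_I
  have h2 : (C (1 / 2) * 2 : MvPolynomial (ι ⊕ ι) ℂ) = 1 := by
    rw [← map_ofNat C, ← C_mul]
    norm_num
  ext (j | j) : 1 <;> simp only [toZW, ofZW, zVar, wVar, AlgHom.comp_apply, aeval_X, map_add,
    map_sub, map_mul, aeval_C, Sum.elim_inl, Sum.elim_inr, algebraMap_eq, AlgHom.id_apply]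
  · linear_combination (X (.inl j) - X (.inr j)) * hI + X (.inl j) * h2
  · linear_combination -(X (.inl j) - X (.inr j)) * hI + X (.inr j) * h2

theorem toZW_injective : Function.Injective (toZW (ι := ι)) :=
  Function.LeftInverse.injective (g := ofZW) fun P => DFunLike.congr_fun ofZW_comp_toZW P

noncomputable def zwPair (t : Finset ι × Finset ι) : MvPolynomial (ι ⊕ ι) ℂ :=
  (∏ a ∈ t.1, zVar a) * ∏ b ∈ t.2, wVar b

theorem linearIndependent_zwPair : LinearIndependent ℂ (zwPair (ι := ι)) := by
  have : zwPair = (toZW (ι := ι)).toLinearMap ∘ (fun s => ∏ v ∈ s, X v) ∘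
      Function.uncurry Finset.disjSum := by
    ext ⟨A, B⟩ : 1
    simp [zwPair, toZW, Finset.prod_disjSum]
  rw [this]
  exact (linearIndependent_prod_X.comp _ Finset.Injective2_disjSum.uncurry).map' _
    (LinearMap.ker_eq_bot.mpr toZW_injective)

variable {p : ℕ}

noncomputable def zwProd (f : Fin p × Fin 2 → ι) : MvPolynomial (ι ⊕ ι) ℂ :=
  ∏ i, zVar (f (i, 0)) * wVar (f (i, 1))

theorem zwProd_eq_zwPair [DecidableEq ι] {f : Fin p × Fin 2 → ι} (hf : f.Injective) :
    zwProd f =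
      zwPair (Finset.univ.image fun i => f (i, 0), Finset.univ.image fun i => f (i, 1)) := by
  have hcol : ∀ k, (fun i => f (i, k)).Injective := fun k _ _ h => congrArg Prod.fst (hf h)
  rw [zwProd, zwPair, Finset.prod_mul_distrib, Finset.prod_image (hcol 0).injOn,
    Finset.prod_image (hcol 1).injOn]

theorem setOf_zwProd_eq_image_zwPair [DecidableEq ι] :
    {P | ∃ f : Fin p × Fin 2 → ι, f.Injective ∧ P = zwProd f} =
      zwPair '' {t | #t.1 = p ∧ #t.2 = p ∧ Disjoint t.1 t.2} := by
  ext P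
  constructor
  · rintro ⟨f, hf, rfl⟩
    have hcol : ∀ k, (fun i => f (i, k)).Injective := fun k _ _ h => congrArg Prod.fst (hf h)
    refine ⟨_, ⟨?_, ?_, ?_⟩, (zwProd_eq_zwPair hf).symm⟩
    · simp [Finset.card_image_of_injective _ (hcol 0)]
    · simp [Finset.card_image_of_injective _ (hcol 1)]
    · simp [Finset.disjoint_left, hf.eq_iff]
  · rintro ⟨t, ⟨hA, hB, hAB⟩, rfl⟩
    let a := (Fintype.equivFinOfCardEq (α := t.1) (by simpa using hA)).symm
    let b := (Fintype.equivFinOfCardEq (α := t.2) (by simpa using hB)).symm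
    let f : Fin p × Fin 2 → ι := fun x => if x.2 = 0 then a x.1 else b x.1
    have hf : f.Injective := by
      rintro ⟨i, k⟩ ⟨j, l⟩ h
      fin_cases k <;> fin_cases l <;>
        simp only [f, Fin.zero_eta, Fin.mk_one, ↓reduceIte, zero_ne_one, one_ne_zero,
          Prod.mk.injEq, and_true, and_false, SetLike.coe_eq_coe, EmbeddingLike.apply_eq_iff_eq]
          at h ⊢
      · exact h
      · exact Finset.disjoint_left.mp hAB (a i).2 (by rw [h]; exact (b j).2)
      · exact Finset.disjoint_left.mp hAB (a j).2 (by rw [← h]; exact (b i).2)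
      · exact h
    refine ⟨f, hf, ?_⟩
    rw [zwPair, zwProd, Finset.prod_mul_distrib, ← Finset.prod_coe_sort t.1,
      ← Finset.prod_coe_sort t.2, ← a.prod_comp, ← b.prod_comp]
    simp [f]

end ComplexCoordinates

local notation "mapℂ" => MvPolynomial.map (algebraMap ℝ ℂ)

variable {N p : ℕ}

theorem zVar_mul_wVar (j k : Fin N) :
    zVar j * wVar k = mapℂ (qFactor j k true) - C Complex.I * mapℂ (qFactor j k false) := by
  have hI : (C Complex.I * C Complex.I : MvPolynomial (Fin N ⊕ Fin N) ℂ) = -1 := by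
    rw [← C_mul, Complex.I_mul_I, map_neg, map_one]
  simp only [qFactor, xVar, yVar, zVar, wVar, if_true, Bool.false_eq_true, if_false, map_add,
    map_sub, map_mul, map_X]
  linear_combination (-X (.inr j) * X (.inr k) : MvPolynomial (Fin N ⊕ Fin N) ℂ) * hI

theorem zVar_mul_wVar_mem_span (j k : Fin N) :
    zVar j * wVar k ∈ span ℂ {mapℂ (qFactor j k true), mapℂ (qFactor j k false)} :=
  mem_span_pair.mpr
    ⟨1, -Complex.I, by rw [zVar_mul_wVar, one_smul, neg_smul, smul_eq_C_mul]; ring⟩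

theorem qFactor_swap (j k : Fin N) (ε : Bool) :
    qFactor k j ε = if ε then qFactor j k ε else -qFactor j k ε := by
  cases ε <;> simp only [qFactor, if_true, Bool.false_eq_true, if_false] <;> ring

theorem map_qFactor_mem_span (j k : Fin N) (ε : Bool) :
    mapℂ (qFactor j k ε) ∈ span ℂ {zVar j * wVar k, zVar k * wVar j} := by
  have hjk := zVar_mul_wVar j k
  have hkj := zVar_mul_wVar k j
  simp only [qFactor_swap j k, if_true, Bool.false_eq_true, if_false, map_neg] at hkj
  rw [mem_span_pair]
  cases ε
  · refine ⟨Complex.I / 2, -(Complex.I / 2), ?_⟩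
    have h : (C (Complex.I / 2) * C Complex.I * 2 : MvPolynomial (Fin N ⊕ Fin N) ℂ) = -1 := by
      rw [← map_ofNat C, ← C_mul, ← C_mul]
      ring_nf
      simp
    rw [smul_eq_C_mul, smul_eq_C_mul, map_neg]
    linear_combination
      C (Complex.I / 2) * hjk - C (Complex.I / 2) * hkj - mapℂ (qFactor j k false) * h
  · refine ⟨1 / 2, 1 / 2, ?_⟩
    have h : (C (1 / 2) * 2 : MvPolynomial (Fin N ⊕ Fin N) ℂ) = 1 := by
      rw [← map_ofNat C, ← C_mul]
      norm_num
    rw [smul_eq_C_mul, smul_eq_C_mul]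
    linear_combination C (1 / 2) * hjk + C (1 / 2) * hkj + mapℂ (qFactor j k true) * h

variable {N p : ℕ}

def pairedProducts (N p : ℕ) : Set (MvPolynomial (Fin N ⊕ Fin N) ℝ) :=
  {P | ∃ f : Fin p × Fin 2 → Fin N, f.Injective ∧ ∃ ε : Fin p → Bool,
    P = ∏ i, qFactor (f (i, 0)) (f (i, 1)) (ε i)}

theorem Fin.two_mul_val_lt (i : Fin p) : 2 * i.val < 2 * p := by omega

theorem Fin.two_mul_val_add_one_lt (i : Fin p) : 2 * i.val + 1 < 2 * p := by omega

theorem setOf_interleaved_eq_pairedProducts :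
    {P : MvPolynomial (Fin N ⊕ Fin N) ℝ |
        ∃ m : Fin (2 * p) → Fin N, Function.Injective m ∧ ∃ ε : Fin p → Bool,
          P = ∏ i : Fin p,
            qFactor (m ⟨2 * i.val, i.two_mul_val_lt⟩)
              (m ⟨2 * i.val + 1, i.two_mul_val_add_one_lt⟩) (ε i)} =
      pairedProducts N p := by
  let e : Fin p × Fin 2 ≃ Fin (2 * p) := finProdFinEquiv.trans (finCongr (mul_comm p 2))
  have he0 : ∀ i, e (i, 0) = ⟨2 * i.val, i.two_mul_val_lt⟩ := fun i => Fin.ext (zero_add _)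
  have he1 : ∀ i, e (i, 1) = ⟨2 * i.val + 1, i.two_mul_val_add_one_lt⟩ := fun i =>
    Fin.ext (add_comm _ _)
  ext P
  constructor
  · rintro ⟨m, hm, ε, rfl⟩
    exact ⟨m ∘ e, hm.comp e.injective, ε, by simp only [Function.comp_apply, he0, he1]⟩
  · rintro ⟨f, hf, ε, rfl⟩
    refine ⟨f ∘ e.symm, hf.comp e.symm.injective, ε, ?_⟩
    simp only [Function.comp_apply, ← he0, ← he1, Equiv.symm_apply_apply]

theorem map_pairedProducts_subset_span_zwProd :
    mapℂ '' pairedProducts N p ⊆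
      span ℂ {P | ∃ f : Fin p × Fin 2 → Fin N, f.Injective ∧ P = zwProd f} := by
  rintro _ ⟨_, ⟨f, hf, ε, rfl⟩, rfl⟩
  rw [map_prod]
  refine span_mono ?_ (prod_mem_span_prod Finset.univ fun i _ =>
    map_qFactor_mem_span (f (i, 0)) (f (i, 1)) (ε i))
  intro P hP
  obtain ⟨g, hg, rfl⟩ := (Set.mem_fintype_prod _ _).mp hP
  have : ∀ i, ∃ τ : Equiv.Perm (Fin 2), g i = zVar (f (i, τ 0)) * wVar (f (i, τ 1)) := by
    intro i
    rcases hg i with h | h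
    · exact ⟨1, h⟩
    · exact ⟨Equiv.swap 0 1, by simpa using h⟩
  choose τ hτ using this
  exact ⟨f ∘ Equiv.prodShear (Equiv.refl _) τ, hf.comp (Equiv.injective _),
    by simp [zwProd, hτ]⟩

theorem zwProd_mem_span_map_pairedProducts {f : Fin p × Fin 2 → Fin N} (hf : f.Injective) :
    zwProd f ∈ span ℂ (mapℂ '' pairedProducts N p) := by
  refine span_mono ?_ (prod_mem_span_prod Finset.univ fun i _ =>
    zVar_mul_wVar_mem_span (f (i, 0)) (f (i, 1)))
  intro P hP
  obtain ⟨g, hg, rfl⟩ := (Set.mem_fintype_prod _ _).mp hP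
  have : ∀ i, ∃ ε, g i = mapℂ (qFactor (f (i, 0)) (f (i, 1)) ε) := by
    intro i
    rcases hg i with h | h
    · exact ⟨true, h⟩
    · exact ⟨false, h⟩
  choose ε hε using this
  exact ⟨_, ⟨f, hf, ε, rfl⟩, by simp [map_prod, hε]⟩

theorem span_map_pairedProducts :
    span ℂ (mapℂ '' pairedProducts N p) =
      span ℂ {P | ∃ f : Fin p × Fin 2 → Fin N, f.Injective ∧ P = zwProd f} :=
  le_antisymm (span_le.mpr map_pairedProducts_subset_span_zwProd)
    (span_le.mpr fun _ ⟨_, hf, hP⟩ => hP ▸ zwProd_mem_span_map_pairedProducts hf)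

/-- The rank of the set of `p`-pair polynomials equals `(N choose p) · ((N−p) choose p)`. -/
theorem rank_pair_polynomials (N p : ℕ) :
    Module.finrank ℝ ↥(Submodule.span ℝ
      {P : MvPolynomial (Fin N ⊕ Fin N) ℝ |
        ∃ m : Fin (2 * p) → Fin N, Function.Injective m ∧ ∃ ε : Fin p → Bool,
          P = ∏ i : Fin p,
            qFactor (m ⟨2 * i.val, by have := i.isLt; omega⟩)
                    (m ⟨2 * i.val + 1, by have := i.isLt; omega⟩) (ε i)}) =
      Nat.choose N p * Nat.choose (N - p) p := by
  rw [setOf_interleaved_eq_pairedProducts, ← finrank_span_image_map_algebraMap (L := ℂ),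
    span_map_pairedProducts, setOf_zwProd_eq_image_zwPair, ← Finset.coe_filter_univ,
    Set.image_eq_range, finrank_span_eq_card]
  · simpa using Finset.card_filter_disjoint_pairs (ι := Fin N) p
  · exact linearIndependent_zwPair.comp _ Subtype.val_injective
end

section
/- For every natural number N, the central binomial coefficient satisfies (2N choose N) = Σ_{p=0}^{⌊N/2⌋} (N choose 2p) · ((2p) choose p) · 2^{N−2p}. Equivalently, (2N choose N) = Σ_{p=0}^{⌊N/2⌋} N! · 2^{N−2p} / (p! · p! · (N−2p)!). -/
/-!
Both sides are the coefficient of `X ^ N` in `(1 + X) ^ (2 * N) = ((1 + X ^ 2) + 2 * X) ^ N`.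
Expanding the right-hand side binomially, the term `(1 + X ^ 2) ^ m * (2 * X) ^ (N - m)` contributes
`2 ^ (N - m)` times the coefficient of `X ^ m` in `(1 + X ^ 2) ^ m`, which vanishes for odd `m` and
is `(2 * p choose p)` for `m = 2 * p`.
-/

open Finset

theorem Finset.sum_range_succ_ite_two_dvd {M : Type*} [AddCommMonoid M] (n : ℕ) (f : ℕ → M) :
    ∑ m ∈ range (n + 1), (if 2 ∣ m then f m else 0) = ∑ p ∈ range (n / 2 + 1), f (2 * p) := by
  rw [← sum_filter]
  refine sum_nbij' (· / 2) (2 * ·) ?_ ?_ ?_ ?_ fun m h => by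
    rw [Nat.mul_div_cancel' (mem_filter.mp h).2]
  all_goals intro _ h; simp only [mem_filter, mem_range] at h ⊢; omega

namespace Polynomial

variable {R : Type*} [CommSemiring R]

theorem coeff_X_sq_add_one_pow (n k : ℕ) :
    ((X ^ 2 + 1 : R[X]) ^ n).coeff k = if 2 ∣ k then (n.choose (k / 2) : R) else 0 := by
  have : (X ^ 2 + 1 : R[X]) ^ n = expand R 2 ((X + 1) ^ n) := by simp
  rw [this, coeff_expand two_pos, coeff_X_add_one_pow]

theorem coeff_mul_C_mul_X_pow_sub {m n : ℕ} (h : m ≤ n) (f : R[X]) (a : R) :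
    (f * (C a * X) ^ (n - m)).coeff n = a ^ (n - m) * f.coeff m := by
  rw [mul_pow, ← C_pow, mul_left_comm, coeff_C_mul, coeff_mul_X_pow', if_pos (Nat.sub_le n m),
    Nat.sub_sub_self h]

theorem coeff_X_sq_add_C_mul_X_add_one_pow_self (a : R) (n : ℕ) :
    ((X ^ 2 + C a * X + 1) ^ n).coeff n =
      ∑ p ∈ range (n / 2 + 1), (n.choose (2 * p) * (2 * p).choose p : R) * a ^ (n - 2 * p) := by
  rw [show X ^ 2 + C a * X + 1 = (X ^ 2 + 1) + C a * X by ring, add_pow, finsetSum_coeff]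
  calc _ = ∑ m ∈ range (n + 1),
        if 2 ∣ m then (n.choose m * m.choose (m / 2) : R) * a ^ (n - m) else 0 := by
        refine sum_congr rfl fun m hm => ?_
        rw [← Nat.cast_comm, ← C_eq_natCast, coeff_C_mul,
          coeff_mul_C_mul_X_pow_sub (Nat.lt_succ_iff.mp (mem_range.mp hm)), coeff_X_sq_add_one_pow]
        split_ifs <;> ring
    _ = _ := by simp [sum_range_succ_ite_two_dvd]

theorem X_add_one_pow_two_mul (n : ℕ) : (X + 1 : R[X]) ^ (2 * n) = (X ^ 2 + C 2 * X + 1) ^ n := by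
  rw [pow_mul, C_ofNat]
  ring

end Polynomial

/-- The central binomial coefficient identity
`(2N choose N) = Σ_{p=0}^{⌊N/2⌋} (N choose 2p) · (2p choose p) · 2^{N−2p}`. -/
theorem central_binom_eq_sum (N : ℕ) :
    Nat.choose (2 * N) N =
      ∑ p ∈ Finset.range (N / 2 + 1),
        Nat.choose N (2 * p) * Nat.choose (2 * p) p * 2 ^ (N - 2 * p) := by
  rw [← Nat.cast_id ((2 * N).choose N), ← Polynomial.coeff_X_add_one_pow ℕ,
    Polynomial.X_add_one_pow_two_mul, Polynomial.coeff_X_sq_add_C_mul_X_add_one_pow_self]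
  simp only [Nat.cast_id]
end
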